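/- Let $R$ be a commutative ring and let $s, u, h_1, h_2, b_1, b_2, b_3, \lambda_1, \lambda_2, \lambda_3, x_1, x_2, x_3 \in R$ satisfy $s\,b_1 = 2u\,h_1 + \lambda_1 h_1 h_2$, $s\,b_2 = 2u\,h_2 + \lambda_2 h_1 h_2$, and $s\,b_3 = -u^2 + \lambda_3 h_1 h_2$. Set $a = x_1 h_1 + x_2 h_2 - x_3 u$, $b = x_1 b_1 + x_2 b_2 + x_3 b_3$, $c = x_3 s$, and let $\Phi$ be the $2\times 2$ matrix $\begin{pmatrix} a & b \\ c & -a \end{pmatrix}$ over $R$. Then $\operatorname{tr}(\Phi^2) = 2\big((x_1 h_1 + x_2 h_2)^2 + h_1 h_2\, x_3\,(\lambda_1 x_1 + \lambda_2 x_2 + \lambda_3 x_3)\big)$. -/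
import Mathlib

open Matrix

/-- The algebraic core of the genus 2 Hitchin map computation: for a trace-free `2 × 2`
matrix `Φ = ![![a, b], ![c, -a]]` built from the data of the extension, subject to the
relations `s bᵢ = 2u hᵢ + λᵢ h₁h₂` (`i = 1,2`) and `s b₃ = -u² + λ₃ h₁h₂`, one has
`tr Φ² = 2((x₁h₁ + x₂h₂)² + h₁h₂ x₃ (λ₁x₁ + λ₂x₂ + λ₃x₃))`. -/
theorem trace_sq_higgs_field_genus_two
    {R : Type*} [CommRing R]
    (s u h₁ h₂ b₁ b₂ b₃ lam₁ lam₂ lam₃ x₁ x₂ x₃ : R)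
    (hb₁ : s * b₁ = 2 * u * h₁ + lam₁ * (h₁ * h₂))
    (hb₂ : s * b₂ = 2 * u * h₂ + lam₂ * (h₁ * h₂))
    (hb₃ : s * b₃ = -u ^ 2 + lam₃ * (h₁ * h₂)) :
    Matrix.trace
        ((!![x₁ * h₁ + x₂ * h₂ - x₃ * u, x₁ * b₁ + x₂ * b₂ + x₃ * b₃;
             x₃ * s, -(x₁ * h₁ + x₂ * h₂ - x₃ * u)] : Matrix (Fin 2) (Fin 2) R) ^ 2) =
      2 * ((x₁ * h₁ + x₂ * h₂) ^ 2 +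
        h₁ * h₂ * x₃ * (lam₁ * x₁ + lam₂ * x₂ + lam₃ * x₃)) := by
  rw [pow_two]
  simp [Matrix.trace_fin_two, Matrix.mul_apply, Fin.sum_univ_two]
  linear_combination (2 * x₁ * x₃) * hb₁ + (2 * x₂ * x₃) * hb₂ + (2 * x₃ * x₃) * hb₃
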